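/- Assume k_{-w₀(α)}=k_α for all α∈Π. Let (π,X) be a finite-dimensional H-module, D:X→X an invertible ℂ-linear map with D∘π(h)=π(δ(h))∘D for all h∈H, and ⟨·,·⟩_• a •-invariant sesquilinear form on X. Then the sesquilinear form ⟨x,y⟩_★ := ⟨x, π(t_{w₀})(Dy)⟩_• is ★-invariant: ⟨π(h)x,y⟩_★=⟨x,π(h^★)y⟩_★ for all h∈H and x,y∈X. -/

import Mathlib

/- Formalization of the setting of Barbasch–Ciubotaru, "Hermitian forms for
affine Hecke algebras": a reduced root system, Weyl group, parameters,
complexifications, and the graded affine Hecke algebra. -/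

noncomputable section

structure GHA where
  (V Vd VC VdC W H : Type)
  [addV : AddCommGroup V] [modV : Module ℝ V] [fdV : FiniteDimensional ℝ V]
  [addVd : AddCommGroup Vd] [modVd : Module ℝ Vd] [fdVd : FiniteDimensional ℝ Vd]
  [deqV : DecidableEq V] [deqW : DecidableEq W]
  [addVC : AddCommGroup VC] [modVC : Module ℂ VC]
  [addVdC : AddCommGroup VdC] [modVdC : Module ℂ VdC]
  [grpW : Group W] [finW : Fintype W]
  [ringH : Ring H] [algH : Algebra ℂ H]
  -- the perfect bilinear pairing between V and V∨
  pairR : V →ₗ[ℝ] Vd →ₗ[ℝ] ℝ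
  pair_nondeg_left : ∀ v : V, (∀ u : Vd, pairR v u = 0) → v = 0
  pair_nondeg_right : ∀ u : Vd, (∀ v : V, pairR v u = 0) → u = 0
  -- roots, coroots, and the bijection α ↦ α∨
  roots : Finset V
  corootsF : Finset Vd
  cv : V → Vd
  roots_ne_zero : ∀ α ∈ roots, α ≠ 0
  coroots_ne_zero : ∀ β ∈ corootsF, β ≠ 0
  cv_mem : ∀ α ∈ roots, cv α ∈ corootsF
  cv_injOn : Set.InjOn cv roots
  cv_surjOn : ∀ β ∈ corootsF, ∃ α ∈ roots, cv α = β
  pair_cv_self : ∀ α ∈ roots, pairR α (cv α) = 2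
  reflV_mem : ∀ α ∈ roots, ∀ β ∈ roots, β - pairR β (cv α) • α ∈ roots
  reflVd_mem : ∀ α ∈ roots, ∀ β ∈ corootsF, β - pairR α β • cv α ∈ corootsF
  reduced : ∀ α ∈ roots, (2 : ℝ) • α ∉ roots
  -- simple roots and positive roots
  simples : Finset V
  posRoots : Finset V
  simples_subset : simples ⊆ posRoots
  posRoots_subset : posRoots ⊆ roots
  roots_pos_or_neg : ∀ α ∈ roots, α ∈ posRoots ∨ -α ∈ posRoots
  posRoots_not_neg : ∀ α ∈ posRoots, -α ∉ posRoots
  simples_linearIndependent : LinearIndependent ℝ (fun β : {x // x ∈ simples} => (β : V))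
  posRoots_nonneg_comb : ∀ α ∈ posRoots, ∃ c : V → ℝ,
    (∀ β ∈ simples, 0 ≤ c β) ∧ α = ∑ β ∈ simples, c β • β
  -- the Weyl group, acting on V and V∨, generated by the reflections s_α
  s : V → W
  actV : W →* V ≃ₗ[ℝ] V
  actVd : W →* Vd ≃ₗ[ℝ] Vd
  actV_s : ∀ α ∈ roots, ∀ v : V, actV (s α) v = v - pairR v (cv α) • α
  actVd_s : ∀ α ∈ roots, ∀ u : Vd, actVd (s α) u = u - pairR α u • cv α
  act_pair : ∀ (w : W) (v : V) (u : Vd), pairR (actV w v) (actVd w u) = pairR v u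
  actV_faithful : ∀ w : W, (∀ v : V, actV w v = v) → w = 1
  gen_by_refl : Subgroup.closure (s '' roots) = (⊤ : Subgroup W)
  actV_roots : ∀ (w : W), ∀ α ∈ roots, actV w α ∈ roots
  -- the longest element
  w0 : W
  w0_neg : ∀ α ∈ posRoots, -(actV w0 α) ∈ posRoots
  w0_unique : ∀ w : W, (∀ α ∈ posRoots, -(actV w α) ∈ posRoots) → w = w0
  -- the parameter function k (extended W-invariantly to all roots)
  kpar : V → ℝ
  kpar_invariant : ∀ (w : W), ∀ α ∈ roots, kpar (actV w α) = kpar α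
  -- complexifications of V and V∨, with real and imaginary parts
  iV : V →+ VC
  iVd : Vd →+ VdC
  iV_smul : ∀ (r : ℝ) (v : V), iV (r • v) = (r : ℂ) • iV v
  iVd_smul : ∀ (r : ℝ) (u : Vd), iVd (r • u) = (r : ℂ) • iVd u
  reV : VC →+ V
  imV : VC →+ V
  reVd : VdC →+ Vd
  imVd : VdC →+ Vd
  reV_iV : ∀ v : V, reV (iV v) = v
  imV_iV : ∀ v : V, imV (iV v) = 0
  reVd_iVd : ∀ u : Vd, reVd (iVd u) = u
  imVd_iVd : ∀ u : Vd, imVd (iVd u) = 0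
  vc_decomp : ∀ x : VC, x = iV (reV x) + Complex.I • iV (imV x)
  vdc_decomp : ∀ y : VdC, y = iVd (reVd y) + Complex.I • iVd (imVd y)
  reV_real_smul : ∀ (r : ℝ) (x : VC), reV ((r : ℂ) • x) = r • reV x
  imV_real_smul : ∀ (r : ℝ) (x : VC), imV ((r : ℂ) • x) = r • imV x
  reVd_real_smul : ∀ (r : ℝ) (y : VdC), reVd ((r : ℂ) • y) = r • reVd y
  imVd_real_smul : ∀ (r : ℝ) (y : VdC), imVd ((r : ℂ) • y) = r • imVd y
  -- the complex bilinear extension of the pairing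
  pairC : VC → VdC → ℂ
  pairC_add_left : ∀ x x' y, pairC (x + x') y = pairC x y + pairC x' y
  pairC_add_right : ∀ x y y', pairC x (y + y') = pairC x y + pairC x y'
  pairC_smul_left : ∀ (c : ℂ) x y, pairC (c • x) y = c * pairC x y
  pairC_smul_right : ∀ (c : ℂ) x y, pairC x (c • y) = c * pairC x y
  pairC_compat : ∀ (v : V) (u : Vd), pairC (iV v) (iVd u) = (pairR v u : ℂ)
  -- the complexified Weyl group actions
  actVC : W →* VC ≃ₗ[ℂ] VC
  actVdC : W →* VdC ≃ₗ[ℂ] VdC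
  actVC_iV : ∀ (w : W) (v : V), actVC w (iV v) = iV (actV w v)
  actVdC_iVd : ∀ (w : W) (u : Vd), actVdC w (iVd u) = iVd (actVd w u)
  -- the graded affine Hecke algebra H: elements t_w and the subalgebra S(V_ℂ)
  t : W → H
  t_one : t 1 = 1
  t_mul : ∀ w w', t w * t w' = t (w * w')
  θ : VC → H
  θ_add : ∀ x y, θ (x + y) = θ x + θ y
  θ_smul : ∀ (c : ℂ) (x : VC), θ (c • x) = c • θ x
  θ_comm : ∀ x y, θ x * θ y = θ y * θ x
  -- the graded Hecke algebra cross relation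
  cross_rel : ∀ α ∈ simples, ∀ ω : VC,
    θ ω * t (s α) = t (s α) * θ (actVC (s α) ω)
      + algebraMap ℂ H ((kpar α : ℂ) * pairC ω (iVd (cv α)))
  -- H ≅ ℂ[W] ⊗ S(V_ℂ) as a (ℂ[W], S(V_ℂ))-bimodule
  pbw_span : ∀ h : H, ∃ c : W → Algebra.adjoin ℂ (Set.range θ),
    h = ∑ w : W, t w * (c w : H)
  pbw_indep : ∀ c : W → Algebra.adjoin ℂ (Set.range θ),
    ∑ w : W, t w * (c w : H) = 0 → ∀ w, c w = 0
  -- the subalgebra generated by θ(V_ℂ) is the symmetric algebra S(V_ℂ)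
  poly_univ : ∀ (B : Type) [CommRing B] [Algebra ℂ B] (f : VC → B),
    (∀ x y, f (x + y) = f x + f y) → (∀ (c : ℂ) x, f (c • x) = c • f x) →
    ∃! g : Algebra.adjoin ℂ (Set.range θ) →ₐ[ℂ] B,
      ∀ x : VC, g ⟨θ x, Algebra.subset_adjoin ⟨x, rfl⟩⟩ = f x

attribute [instance] GHA.addV GHA.modV GHA.fdV GHA.addVd GHA.modVd GHA.fdVd
  GHA.deqV GHA.deqW GHA.addVC GHA.modVC GHA.addVdC GHA.modVdC GHA.grpW GHA.finW
  GHA.ringH GHA.algH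

namespace GHA

/-- Complex conjugation on V_ℂ. -/
def conjVC (D : GHA) (x : D.VC) : D.VC := D.iV (D.reV x) - Complex.I • D.iV (D.imV x)

/-- Complex conjugation on V∨_ℂ. -/
def conjVdC (D : GHA) (y : D.VdC) : D.VdC := D.iVd (D.reVd y) - Complex.I • D.iVd (D.imVd y)

/-- The bullet operation: conjugate-linear anti-automorphism with t_w ↦ t_{w⁻¹},
ω ↦ conj ω. -/
structure IsBullet (D : GHA) (f : D.H → D.H) : Prop where
  map_add : ∀ x y, f (x + y) = f x + f y
  map_smul : ∀ (c : ℂ) (x : D.H), f (c • x) = (starRingEnd ℂ) c • f x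
  map_mul : ∀ x y, f (x * y) = f y * f x
  map_one : f 1 = 1
  map_t : ∀ w : D.W, f (D.t w) = D.t w⁻¹
  map_theta : ∀ x : D.VC, f (D.θ x) = D.θ (D.conjVC x)

/-- The star operation: conjugate-linear anti-automorphism with t_w ↦ t_{w⁻¹},
ω ↦ −t_{w₀}·conj(w₀(ω))·t_{w₀}. -/
structure IsStar (D : GHA) (f : D.H → D.H) : Prop where
  map_add : ∀ x y, f (x + y) = f x + f y
  map_smul : ∀ (c : ℂ) (x : D.H), f (c • x) = (starRingEnd ℂ) c • f x
  map_mul : ∀ x y, f (x * y) = f y * f x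
  map_one : f 1 = 1
  map_t : ∀ w : D.W, f (D.t w) = D.t w⁻¹
  map_theta : ∀ x : D.VC,
    f (D.θ x) = -(D.t D.w0 * D.θ (D.conjVC (D.actVC D.w0 x)) * D.t D.w0)

/-- The automorphism δ: t_w ↦ t_{w₀ww₀}, ω ↦ −w₀(ω). -/
structure IsDelta (D : GHA) (f : D.H → D.H) : Prop where
  map_add : ∀ x y, f (x + y) = f x + f y
  map_smul : ∀ (c : ℂ) (x : D.H), f (c • x) = c • f x
  map_mul : ∀ x y, f (x * y) = f x * f y
  map_one : f 1 = 1
  map_t : ∀ w : D.W, f (D.t w) = D.t (D.w0 * w * D.w0)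
  map_theta : ∀ x : D.VC, f (D.θ x) = -(D.θ (D.actVC D.w0 x))

/-- The standing assumption k_{−w₀(α)} = k_α for α ∈ Π. -/
def KSymm (D : GHA) : Prop := ∀ α ∈ D.simples, D.kpar (-(D.actV D.w0 α)) = D.kpar α

section Forms

variable {X : Type} [AddCommGroup X] [Module ℂ X]

/-- Sesquilinear form (conjugate-linear in the first variable). -/
def SesqForm (B : X → X → ℂ) : Prop :=
  (∀ x x' y, B (x + x') y = B x y + B x' y) ∧
  (∀ x y y', B x (y + y') = B x y + B x y') ∧
  (∀ (c : ℂ) (x y : X), B (c • x) y = (starRingEnd ℂ) c * B x y) ∧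
  (∀ (c : ℂ) (x y : X), B x (c • y) = c * B x y)

/-- Hermitian form. -/
def HermForm (B : X → X → ℂ) : Prop := ∀ x y, B x y = (starRingEnd ℂ) (B y x)

/-- κ-invariance of a form: ⟨π(h)x, y⟩ = ⟨x, π(κ(h))y⟩. -/
def InvForm (D : GHA) (π : D.H →ₐ[ℂ] Module.End ℂ X) (κ : D.H → D.H)
    (B : X → X → ℂ) : Prop :=
  ∀ (h : D.H) (x y : X), B (π h x) y = B x (π (κ h) y)

end Forms

/-- Irreducibility of a representation of a ℂ-algebra A on X. -/
def IsIrrRep (A : Type) [Ring A] [Algebra ℂ A] {X : Type} [AddCommGroup X]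
    [Module ℂ X] (π : A →ₐ[ℂ] Module.End ℂ X) : Prop :=
  Nontrivial X ∧ ∀ U : Submodule ℂ X, (∀ (a : A), ∀ x ∈ U, π a x ∈ U) → U = ⊥ ∨ U = ⊤

/-- Generalized weight space for a commuting family of operators indexed by V_ℂ. -/
def wtAux (D : GHA) {X : Type} [AddCommGroup X] [Module ℂ X]
    (T : D.VC → Module.End ℂ X) (lam : D.VdC) : Submodule ℂ X where
  carrier := {x | ∀ ω : D.VC, ∃ n : ℕ,
    ((T ω - D.pairC ω lam • (1 : Module.End ℂ X)) ^ n) x = 0}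
  zero_mem' := fun ω => ⟨1, by simp⟩
  add_mem' := by
    intro a b ha hb
    intro ω
    obtain ⟨n, hn⟩ := ha ω
    obtain ⟨m, hm⟩ := hb ω
    refine ⟨n + m, ?_⟩
    have hA : ((T ω - D.pairC ω lam • (1 : Module.End ℂ X)) ^ (n + m)) a = 0 := by
      rw [add_comm, pow_add, Module.End.mul_apply, hn, map_zero]
    have hB : ((T ω - D.pairC ω lam • (1 : Module.End ℂ X)) ^ (n + m)) b = 0 := by
      rw [pow_add, Module.End.mul_apply, hm, map_zero]
    rw [map_add, hA, hB, add_zero]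
  smul_mem' := by
    intro c a ha ω
    obtain ⟨n, hn⟩ := ha ω
    exact ⟨n, by rw [map_smul, hn, smul_zero]⟩

/-- Generalized A-weight space X_λ of an H-module. -/
def wtH (D : GHA) {X : Type} [AddCommGroup X] [Module ℂ X]
    (π : D.H →ₐ[ℂ] Module.End ℂ X) (lam : D.VdC) : Submodule ℂ X :=
  D.wtAux (fun ω => π (D.θ ω)) lam

/-- The set Ω(X) of A-weights of an H-module. -/
def OmegaH (D : GHA) {X : Type} [AddCommGroup X] [Module ℂ X]
    (π : D.H →ₐ[ℂ] Module.End ℂ X) : Set D.VdC :=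
  {lam | D.wtH π lam ≠ ⊥}

/-- Casselman's criterion for temperedness. -/
def IsTempered (D : GHA) {X : Type} [AddCommGroup X] [Module ℂ X]
    (π : D.H →ₐ[ℂ] Module.End ℂ X) : Prop :=
  ∀ lam ∈ D.OmegaH π, ∀ ω : D.V,
    (∀ α ∈ D.simples, 0 < D.pairR ω (D.cv α)) → D.pairR ω (D.reVd lam) ≤ 0

section Parabolic

variable (D : GHA) (PiM : Finset D.V)

/-- The parabolic subgroup W_M. -/
def WM : Subgroup D.W := Subgroup.closure (D.s '' (PiM : Set D.V))

/-- The positive roots R⁺_M lying in the span of Π_M. -/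
def RplusM : Set D.V :=
  {α | α ∈ D.posRoots ∧ α ∈ Submodule.span ℝ (PiM : Set D.V)}

/-- x is the minimal length representative of x·W_M, i.e. x(R⁺_M) ⊆ R⁺. -/
def IsMinRep (x : D.W) : Prop := ∀ α ∈ D.RplusM PiM, D.actV x α ∈ D.posRoots

/-- The set J_M of minimal length coset representatives. -/
abbrev JM : Type := {x : D.W // D.IsMinRep PiM x}

/-- The parabolic subalgebra H_M. -/
def HM : Subalgebra ℂ D.H :=
  Algebra.adjoin ℂ (Set.range D.θ ∪ (D.t '' ((D.WM PiM : Subgroup D.W) : Set D.W)))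

/-- t_w as an element of H_M, for w ∈ W_M. -/
def tM (w : D.W) (hw : w ∈ D.WM PiM) : D.HM PiM :=
  ⟨D.t w, Algebra.subset_adjoin (Or.inr ⟨w, hw, rfl⟩)⟩

/-- θ(ω) as an element of H_M. -/
def θM (x : D.VC) : D.HM PiM :=
  ⟨D.θ x, Algebra.subset_adjoin (Or.inl ⟨x, rfl⟩)⟩

/-- Π_{δ(M)} = −w₀(Π_M). -/
def deltaSimples : Finset D.V := PiM.image (fun α => -(D.actV D.w0 α))

/-- w is the longest element of W_M. -/
def IsLongest (w : D.W) : Prop :=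
  w ∈ D.WM PiM ∧ ∀ α ∈ D.RplusM PiM, -(D.actV w α) ∈ D.RplusM PiM

end Parabolic

/-- The unique factorization z = c_M(z)·m_M(z) with c_M(z) minimal in z·W_M and
m_M(z) ∈ W_M. -/
structure CosetData (D : GHA) (PiM : Finset D.V) where
  c : D.W → D.W
  m : D.W → D.W
  c_min : ∀ z, D.IsMinRep PiM (c z)
  m_mem : ∀ z, m z ∈ D.WM PiM
  factor : ∀ z, z = c z * m z
  uniq : ∀ (z c' m' : D.W), D.IsMinRep PiM c' → m' ∈ D.WM PiM → z = c' * m' →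
    c' = c z ∧ m' = m z

/-- The defining formulas for the H-action on the parabolically induced module
X(M,σ) = H ⊗_{H_M} U, realized on ⊕_{x ∈ J_M} U. -/
def IsInducedAction (D : GHA) (PiM : Finset D.V) (cd : CosetData D PiM)
    {U : Type} [AddCommGroup U] [Module ℂ U]
    (σ : D.HM PiM →ₐ[ℂ] Module.End ℂ U)
    (πI : D.H →ₐ[ℂ] Module.End ℂ (D.JM PiM → U)) : Prop :=
  (∀ (z : D.W) (x : D.JM PiM) (v : U),
      πI (D.t z) (Pi.single x v) =
        Pi.single (⟨cd.c (z * x.1), cd.c_min _⟩ : D.JM PiM)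
          (σ (D.tM PiM (cd.m (z * x.1)) (cd.m_mem _)) v)) ∧
  (∀ (ω : D.VC) (x : D.JM PiM) (v : U),
      πI (D.θ ω) (Pi.single x v) =
        Pi.single x (σ (D.θM PiM (D.actVC x.1⁻¹ ω)) v) +
          ∑ β ∈ D.posRoots.filter (fun β => -(D.actV x.1⁻¹ β) ∈ D.posRoots),
            ((D.kpar β : ℂ) * D.pairC ω (D.iVd (D.cv β))) •
              (Pi.single (⟨cd.c (D.s β * x.1), cd.c_min _⟩ : D.JM PiM)
                (σ (D.tM PiM (cd.m (D.s β * x.1)) (cd.m_mem _)) v) : D.JM PiM → U))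

end GHA

/-! The conjugate-linear anti-automorphism `h ↦ t_{w₀} δ(h^★) t_{w₀}` agrees with `•` on the
generators `t_w` and `ω` of `H` (because `w₀² = 1` and complex conjugation commutes with `W`), hence
`h^• t_{w₀} = t_{w₀} δ(h^★)` for all `h`. Given this identity, `π(h)` is moved across the form by
`•`-invariance, then past `π(t_{w₀})` and the intertwiner `D`. -/

namespace GHA

variable (D : GHA)

theorem pairC_zero_left (y : D.VdC) : D.pairC 0 y = 0 := by
  simpa using D.pairC_add_left 0 0 y

theorem eq_zero_of_iV_add_I_smul_iV_eq_zero {a b : D.V}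
    (h : D.iV a + Complex.I • D.iV b = 0) : a = 0 ∧ b = 0 := by
  have hpair (u : D.Vd) : (D.pairR a u : ℂ) + Complex.I * (D.pairR b u : ℂ) = 0 := by
    have := congrArg (D.pairC · (D.iVd u)) h
    rwa [D.pairC_add_left, D.pairC_smul_left, D.pairC_compat, D.pairC_compat,
      D.pairC_zero_left] at this
  exact ⟨D.pair_nondeg_left a fun u => by simpa using congrArg Complex.re (hpair u),
    D.pair_nondeg_left b fun u => by simpa using congrArg Complex.im (hpair u)⟩

theorem eq_and_eq_of_iV_add_I_smul_iV_eq {a b a' b' : D.V}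
    (h : D.iV a + Complex.I • D.iV b = D.iV a' + Complex.I • D.iV b') : a = a' ∧ b = b' := by
  have hsub : D.iV (a - a') + Complex.I • D.iV (b - b') = 0 := by
    rw [map_sub, map_sub, smul_sub, sub_add_sub_comm, h, sub_self]
  obtain ⟨ha, hb⟩ := D.eq_zero_of_iV_add_I_smul_iV_eq_zero hsub
  exact ⟨sub_eq_zero.mp ha, sub_eq_zero.mp hb⟩

theorem actVC_eq_iV_add_I_smul_iV (w : D.W) (x : D.VC) :
    D.actVC w x = D.iV (D.actV w (D.reV x)) + Complex.I • D.iV (D.actV w (D.imV x)) := by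
  conv_lhs => rw [D.vc_decomp x]
  rw [map_add, map_smul, D.actVC_iV, D.actVC_iV]

theorem reV_actVC_and_imV_actVC (w : D.W) (x : D.VC) :
    D.reV (D.actVC w x) = D.actV w (D.reV x) ∧ D.imV (D.actVC w x) = D.actV w (D.imV x) :=
  D.eq_and_eq_of_iV_add_I_smul_iV_eq <|
    (D.vc_decomp (D.actVC w x)).symm.trans (D.actVC_eq_iV_add_I_smul_iV w x)

theorem conjVC_actVC (w : D.W) (x : D.VC) :
    D.conjVC (D.actVC w x) = D.actVC w (D.conjVC x) := by
  obtain ⟨hre, him⟩ := D.reV_actVC_and_imV_actVC w x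
  rw [conjVC, conjVC, hre, him, map_sub, map_smul, D.actVC_iV, D.actVC_iV]

theorem image_neg_actV_w0_posRoots :
    D.posRoots.image (fun β => -(D.actV D.w0 β)) = D.posRoots :=
  Finset.eq_of_subset_of_card_le (Finset.image_subset_iff.mpr D.w0_neg)
    (Finset.card_image_of_injective _ fun _ _ h => (D.actV D.w0).injective (neg_inj.mp h)).ge

theorem w0_inv : D.w0⁻¹ = D.w0 := by
  refine D.w0_unique _ fun α hα => ?_
  rw [← D.image_neg_actV_w0_posRoots, Finset.mem_image] at hα
  obtain ⟨β, hβ, rfl⟩ := hα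
  rwa [map_neg, ← LinearEquiv.mul_apply, ← map_mul, inv_mul_cancel, map_one,
    LinearEquiv.coe_one, id_eq, neg_neg]

theorem w0_mul_w0 : D.w0 * D.w0 = 1 := by
  nth_rewrite 1 [← D.w0_inv]
  exact inv_mul_cancel D.w0

theorem t_w0_mul_t_w0 : D.t D.w0 * D.t D.w0 = 1 := by
  rw [D.t_mul, D.w0_mul_w0, D.t_one]

theorem actVC_w0_actVC_w0 (x : D.VC) : D.actVC D.w0 (D.actVC D.w0 x) = x := by
  rw [← LinearEquiv.mul_apply, ← map_mul, D.w0_mul_w0, map_one, LinearEquiv.coe_one, id_eq]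

theorem induction_on {P : D.H → Prop} (algebraMap : ∀ c : ℂ, P (algebraMap ℂ D.H c))
    (t : ∀ w, P (D.t w)) (θ : ∀ ω, P (D.θ ω))
    (add : ∀ a b, P a → P b → P (a + b)) (mul : ∀ a b, P a → P b → P (a * b)) (h : D.H) :
    P h := by
  have hpoly (p : D.H) (hp : p ∈ Algebra.adjoin ℂ (Set.range D.θ)) : P p := by
    induction hp using Algebra.adjoin_induction with
    | mem _ hx => obtain ⟨ω, rfl⟩ := hx; exact θ ω
    | algebraMap c => exact algebraMap c
    | add a b _ _ ha hb => exact add a b ha hb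
    | mul a b _ _ ha hb => exact mul a b ha hb
  obtain ⟨c, rfl⟩ := D.pbw_span h
  refine Finset.sum_induction _ P add (by simpa using algebraMap 0) fun w _ => ?_
  exact mul _ _ (t w) (hpoly _ (c w).2)

variable {D}

theorem IsDelta.map_neg {del : D.H → D.H} (hd : D.IsDelta del) (a : D.H) : del (-a) = -del a := by
  rw [← neg_one_smul ℂ a, hd.map_smul, neg_one_smul]

theorem IsBullet.map_mul_t_w0 {bul st del : D.H → D.H}
    (hb : D.IsBullet bul) (hs : D.IsStar st) (hd : D.IsDelta del) (h : D.H) :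
    bul h * D.t D.w0 = D.t D.w0 * del (st h) := by
  induction h using D.induction_on with
  | algebraMap c =>
    simp only [Algebra.algebraMap_eq_smul_one, hb.map_smul, hs.map_smul, hd.map_smul,
      hb.map_one, hs.map_one, hd.map_one, smul_mul_assoc, mul_smul_comm, one_mul, mul_one]
  | t w =>
    rw [hb.map_t, hs.map_t, hd.map_t, D.t_mul, D.t_mul, ← mul_assoc, ← mul_assoc, D.w0_mul_w0,
      one_mul]
  | θ ω =>
    rw [hb.map_theta, hs.map_theta, hd.map_neg, hd.map_mul, hd.map_mul, hd.map_t, hd.map_theta,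
      D.conjVC_actVC, D.actVC_w0_actVC_w0, D.w0_mul_w0, one_mul]
    simp only [mul_neg, neg_mul, neg_neg, ← mul_assoc, D.t_w0_mul_t_w0, one_mul]
  | add a b ha hb' =>
    rw [hb.map_add, hs.map_add, hd.map_add, add_mul, mul_add, ha, hb']
  | mul a b ha hb' =>
    rw [hb.map_mul, hs.map_mul, hd.map_mul, mul_assoc, ha, ← mul_assoc, hb', mul_assoc]

end GHA

open GHA in
theorem stmt_11_general (D : GHA) (bul st del : D.H → D.H)
    (hb : D.IsBullet bul) (hs : D.IsStar st) (hd : D.IsDelta del)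
    {X : Type} [AddCommGroup X] [Module ℂ X]
    (π : D.H →ₐ[ℂ] Module.End ℂ X)
    (Dmap : X →ₗ[ℂ] X)
    (hDdel : ∀ (h : D.H) (x : X), Dmap (π h x) = π (del h) (Dmap x))
    (B : X → X → ℂ) (hinv : D.InvForm π bul B) :
    ∀ (h : D.H) (x y : X),
      B (π h x) (π (D.t D.w0) (Dmap y)) =
      B x (π (D.t D.w0) (Dmap (π (st h) y))) := by
  intro h x y
  rw [hinv h x, ← Module.End.mul_apply, ← map_mul, hb.map_mul_t_w0 hs hd, map_mul,
    Module.End.mul_apply, hDdel]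

open GHA in
/-- a •-invariant sesquilinear form twisted by t_{w₀} and an
intertwiner for δ is ★-invariant. -/
theorem stmt_11 (D : GHA) (hk : D.KSymm) (bul st del : D.H → D.H)
    (hb : D.IsBullet bul) (hs : D.IsStar st) (hd : D.IsDelta del)
    {X : Type} [AddCommGroup X] [Module ℂ X] [FiniteDimensional ℂ X]
    (π : D.H →ₐ[ℂ] Module.End ℂ X)
    (Dmap : X →ₗ[ℂ] X) (hDbij : Function.Bijective Dmap)
    (hDdel : ∀ (h : D.H) (x : X), Dmap (π h x) = π (del h) (Dmap x))
    (B : X → X → ℂ) (hsesq : SesqForm B) (hinv : D.InvForm π bul B) :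
    ∀ (h : D.H) (x y : X),
      B (π h x) (π (D.t D.w0) (Dmap y)) =
      B x (π (D.t D.w0) (Dmap (π (st h) y))) :=
  stmt_11_general D bul st del hb hs hd π Dmap hDdel B hinv
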